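/- Let Γ = Cay(G, S_{i,j} : 1 ≤ i,j ≤ m) be an m-PCayley digraph of a finite group G (i.e., S_{i,i} = ∅ for all i). Then Γ is mPCI if and only if every semiregular subgroup of Aut(Γ) isomorphic to G whose orbit set equals {G_1, …, G_m} is conjugate to R(G) in Aut(Γ). -/

import Mathlib

/-!
A semiregular `H ≅ G` whose orbits are the blocks `G_i` is conjugate to `R(G)` in `Sym(V)` by a
block-fixing permutation `E`: send `x_i` to `φ(x⁻¹)(i, 1)`. Pulling `Γ` back along `E` gives an
`R(G)`-invariant, hence `m`-PCayley, digraph that is p-isomorphic to `Γ`, and the element of the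
normalizer supplied by mPCI corrects `E` into an automorphism of `Γ`. Conversely, for a
p-isomorphism `e : Γ → Cay(G, T)` the group `e⁻¹ R(G) e` is such a subgroup of `Aut(Γ)`, and
conjugating it back to `R(G)` by `a ∈ Aut(Γ)` makes `e a` normalize `R(G)`. Both directions use
that `a R(G) a⁻¹ = b R(G) b⁻¹` exactly when `b⁻¹ a` normalizes `R(G)`.
-/

/-- Right multiplication permutation `R(g) : x_i ↦ (xg)_i` on `V = Fin m × G`. -/
def Rperm (m : ℕ) {G : Type*} [Group G] (g : G) : Equiv.Perm (Fin m × G) where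
  toFun v := (v.1, v.2 * g)
  invFun v := (v.1, v.2 * g⁻¹)
  left_inv v := by simp
  right_inv v := by simp

/-- The subgroup `R(G) = {R(g) : g ∈ G}` of `Sym(V)`. -/
def RG (m : ℕ) (G : Type*) [Group G] : Subgroup (Equiv.Perm (Fin m × G)) where
  carrier := {σ | ∃ g : G, σ = Rperm m g}
  one_mem' := ⟨1, Equiv.ext fun v => by simp [Rperm]⟩
  mul_mem' := by
    rintro _ _ ⟨g, rfl⟩ ⟨h, rfl⟩
    exact ⟨h * g, Equiv.ext fun v => by simp [Rperm, mul_assoc]⟩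
  inv_mem' := by
    rintro _ ⟨g, rfl⟩
    exact ⟨g⁻¹, Equiv.ext fun v => by
      simp [Rperm, Equiv.Perm.inv_def]⟩

/-- The arc relation of the `m`-Cayley digraph `Cay(G, S_{i,j})`: there is an arc
from `x_i` to `(sx)_j` for each `s ∈ S_{i,j}`. -/
def arcRel (m : ℕ) {G : Type*} [Group G] (S : Fin m → Fin m → Set G)
    (u v : Fin m × G) : Prop :=
  v.2 * u.2⁻¹ ∈ S u.1 v.1

/-- The automorphism group of the `m`-Cayley digraph `Cay(G, S_{i,j})`, as a
subgroup of `Sym(V)`. -/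
def digraphAut (m : ℕ) (G : Type*) [Group G] (S : Fin m → Fin m → Set G) :
    Subgroup (Equiv.Perm (Fin m × G)) where
  carrier := {e | ∀ u v : Fin m × G, arcRel m S (e u) (e v) ↔ arcRel m S u v}
  one_mem' := by intro u v; simp
  mul_mem' := by
    intro a b ha hb u v
    have := (ha (b u) (b v)).trans (hb u v)
    simpa using this
  inv_mem' := by
    intro a ha u v
    have := ha (a⁻¹ u) (a⁻¹ v)
    simpa using this.symm

/-- The `m`-PCayley digraph `Cay(G, S_{i,j})` (all `S_{i,i} = ∅`) is mPCI: every
`m`-PCayley digraph of `G` that is p-isomorphic to it (isomorphic via an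
isomorphism keeping `{G_1, …, G_m}` invariant) is its image under an element of
the normalizer of `R(G)` in `Sym(V)`. -/
def IsMPCI (m : ℕ) (G : Type*) [Group G] (S : Fin m → Fin m → Set G) : Prop :=
  ∀ T : Fin m → Fin m → Set G, (∀ i, T i i = (∅ : Set G)) →
    (∃ e : Equiv.Perm (Fin m × G),
      (∃ τ : Fin m → Fin m, ∀ v : Fin m × G, (e v).1 = τ v.1) ∧
      ∀ u v : Fin m × G, arcRel m S u v ↔ arcRel m T (e u) (e v)) →
    ∃ n ∈ Subgroup.normalizer ((RG m G : Subgroup (Equiv.Perm (Fin m × G))) : Set (Equiv.Perm (Fin m × G))),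
      ∀ u v : Fin m × G, arcRel m S u v ↔ arcRel m T (n u) (n v)


open Equiv

section Cayley

variable {m : ℕ} {G : Type*} [Group G]

@[simp] lemma Rperm_apply (g : G) (v : Fin m × G) : Rperm m g v = (v.1, v.2 * g) := rfl

lemma Rperm_mul (g h : G) : Rperm m g * Rperm m h = Rperm m (h * g) :=
  Equiv.ext fun v => by simp [mul_assoc]

@[simp] lemma Rperm_one : Rperm m (1 : G) = 1 := Equiv.ext fun v => by simp

lemma Rperm_apply_eq_self_iff {g : G} {v : Fin m × G} : Rperm m g v = v ↔ g = 1 := by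
  simp [Prod.ext_iff]

lemma exists_Rperm_apply_eq_iff {v w : Fin m × G} : (∃ g, Rperm m g v = w) ↔ v.1 = w.1 :=
  ⟨fun ⟨g, hg⟩ => hg ▸ rfl, fun h => ⟨v.2⁻¹ * w.2, Prod.ext h (by simp)⟩⟩

lemma Rperm_injective [NeZero m] : Function.Injective (Rperm m (G := G)) := fun g h hgh => by
  simpa using congrArg (fun σ : Perm (Fin m × G) => (σ (0, 1)).2) hgh

lemma mem_RG {σ : Perm (Fin m × G)} : σ ∈ RG m G ↔ ∃ g, σ = Rperm m g := Iff.rfl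

/-- `R` reverses products (`Rperm_mul`), hence the inverse in `g ↦ R(g⁻¹)`. -/
noncomputable def RGEquiv [NeZero m] : G ≃* RG m G :=
  MulEquiv.ofBijective
    ({ toFun g := ⟨Rperm m g⁻¹, g⁻¹, rfl⟩
       map_one' := Subtype.ext <| Equiv.ext fun v => by simp
       map_mul' g h := Subtype.ext <| by simp [Rperm_mul] } : G →* RG m G)
    ⟨fun g h hgh => inv_injective <| Rperm_injective congr(Subtype.val $hgh),
      fun ⟨_, g, hg⟩ => ⟨g⁻¹, Subtype.ext <| by simp [hg]⟩⟩

lemma Rperm_mem_digraphAut (S : Fin m → Fin m → Set G) (g : G) :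
    Rperm m g ∈ digraphAut m G S := fun u v => by
  simp [arcRel, mul_assoc]

def connectionSets (r : Fin m × G → Fin m × G → Prop) : Fin m → Fin m → Set G :=
  fun j k => {t | r (j, 1) (k, t)}

lemma arcRel_connectionSets {r : Fin m × G → Fin m × G → Prop}
    (hr : ∀ g u v, r (Rperm m g u) (Rperm m g v) ↔ r u v) (u v : Fin m × G) :
    arcRel m (connectionSets r) u v ↔ r u v := by
  rw [← hr u.2⁻¹]
  simp [arcRel, connectionSets]

end Cayley

lemma Subgroup.map_conj_eq_map_conj_iff {K : Type*} [Group K] {H : Subgroup K} {a b : K} :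
    H.map (MulAut.conj a).toMonoidHom = H.map (MulAut.conj b).toMonoidHom ↔
      b⁻¹ * a ∈ Subgroup.normalizer (H : Set K) := by
  have hcomp : H.map (MulAut.conj a).toMonoidHom =
      (H.map (MulAut.conj (b⁻¹ * a)).toMonoidHom).map (MulAut.conj b).toMonoidHom := by
    rw [Subgroup.map_map]
    congr 1
    ext
    simp [mul_assoc]
  rw [hcomp, (Subgroup.map_injective (MulAut.conj b).injective).eq_iff,
    Subgroup.mem_normalizer_iff_map_conj_eq]
  rfl

lemma Equiv.Perm.fst_apply_eq_fst_apply_iff {α β : Type*} [Finite α] {e : Perm (α × β)}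
    {τ : α → α} (hτ : ∀ v, (e v).1 = τ v.1) {v w : α × β} :
    (e v).1 = (e w).1 ↔ v.1 = w.1 := by
  have hτ_surj : Function.Surjective τ := fun j =>
    ⟨(e.symm (j, v.2)).1, by rw [← hτ, e.apply_symm_apply]⟩
  rw [hτ, hτ, (Finite.injective_iff_surjective.2 hτ_surj).eq_iff]

section Conjugate

variable {m : ℕ} {G : Type*} [Group G]

lemma mem_map_conj_RG {a x : Perm (Fin m × G)} :
    x ∈ (RG m G).map (MulAut.conj a).toMonoidHom ↔ ∃ g, a * Rperm m g * a⁻¹ = x := by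
  simp [mem_RG]

lemma map_conj_RG_semiregular (a : Perm (Fin m × G)) :
    ∀ h ∈ (RG m G).map (MulAut.conj a).toMonoidHom, ∀ v, h v = v → h = 1 := by
  simp only [mem_map_conj_RG]
  rintro _ ⟨g, rfl⟩ v hv
  have hg : g = 1 := Rperm_apply_eq_self_iff.1 (by simpa using congr(a⁻¹ $hv))
  simp [hg]

lemma exists_mem_map_conj_RG_apply_eq_iff (a : Perm (Fin m × G)) (v w : Fin m × G) :
    (∃ h ∈ (RG m G).map (MulAut.conj a).toMonoidHom, h v = w) ↔ (a⁻¹ v).1 = (a⁻¹ w).1 := by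
  rw [← exists_Rperm_apply_eq_iff]
  simp only [mem_map_conj_RG]
  constructor
  · rintro ⟨_, ⟨g, rfl⟩, rfl⟩
    exact ⟨g, by simp⟩
  · rintro ⟨g, hg⟩
    refine ⟨_, ⟨g, rfl⟩, ?_⟩
    change a (Rperm m g (a⁻¹ v)) = w
    rw [hg, ← Perm.mul_apply, mul_inv_cancel, Perm.one_apply]

lemma map_conj_RG_le_digraphAut {S T : Fin m → Fin m → Set G} {e : Perm (Fin m × G)}
    (he : ∀ u v, arcRel m S u v ↔ arcRel m T (e u) (e v)) :
    (RG m G).map (MulAut.conj e⁻¹).toMonoidHom ≤ digraphAut m G S := by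
  intro x hx u v
  obtain ⟨g, rfl⟩ := mem_map_conj_RG.1 hx
  simpa [he] using Rperm_mem_digraphAut T g (e u) (e v)

end Conjugate

section Semiregular

variable {m : ℕ} {G : Type*} [Group G] {H : Subgroup (Perm (Fin m × G))}

def orbitMap (φ : G ≃* H) (v : Fin m × G) : Fin m × G := (φ v.2⁻¹ : Perm (Fin m × G)) (v.1, 1)

lemma orbitMap_Rperm (φ : G ≃* H) (g : G) (v : Fin m × G) :
    orbitMap φ (Rperm m g v) = (φ g⁻¹ : Perm (Fin m × G)) (orbitMap φ v) := by
  simp [orbitMap, mul_inv_rev]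

lemma fst_orbitMap (horb : ∀ v w : Fin m × G, (∃ h ∈ H, h v = w) ↔ v.1 = w.1) (φ : G ≃* H)
    (v : Fin m × G) : (orbitMap φ v).1 = v.1 :=
  ((horb _ _).1 ⟨_, (φ _).2, rfl⟩).symm

lemma orbitMap_surjective (horb : ∀ v w : Fin m × G, (∃ h ∈ H, h v = w) ↔ v.1 = w.1)
    (φ : G ≃* H) : Function.Surjective (orbitMap φ) := by
  rintro ⟨i, z⟩
  obtain ⟨h, hH, hh⟩ := (horb (i, 1) (i, z)).2 rfl
  exact ⟨(i, (φ.symm ⟨h, hH⟩)⁻¹), by simpa [orbitMap] using hh⟩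

lemma orbitMap_injective (hsemi : ∀ h ∈ H, ∀ v : Fin m × G, h v = v → h = 1)
    (horb : ∀ v w : Fin m × G, (∃ h ∈ H, h v = w) ↔ v.1 = w.1) (φ : G ≃* H) :
    Function.Injective (orbitMap φ) := by
  rintro ⟨i, x⟩ ⟨j, y⟩ hxy
  obtain rfl : i = j := by simpa [fst_orbitMap horb] using congr(Prod.fst $hxy)
  have hfix : (φ (y * x⁻¹) : Perm (Fin m × G)) (i, 1) = (i, 1) := by
    simpa [orbitMap, map_mul] using congr((φ y : Perm (Fin m × G)) $hxy)
  have hφ : φ (y * x⁻¹) = 1 := Subtype.ext (hsemi _ (φ _).2 _ hfix)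
  rw [map_eq_one_iff _ φ.injective, mul_inv_eq_one] at hφ
  rw [hφ]

theorem exists_perm_map_conj_RG_eq (hsemi : ∀ h ∈ H, ∀ v : Fin m × G, h v = v → h = 1)
    (horb : ∀ v w : Fin m × G, (∃ h ∈ H, h v = w) ↔ v.1 = w.1) (φ : G ≃* H) :
    ∃ E : Perm (Fin m × G), (∀ v, (E v).1 = v.1) ∧
      (RG m G).map (MulAut.conj E).toMonoidHom = H := by
  let E := Equiv.ofBijective _ ⟨orbitMap_injective hsemi horb φ, orbitMap_surjective horb φ⟩
  have hconj : ∀ g, E * Rperm m g * E⁻¹ = φ g⁻¹ := fun g => by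
    rw [mul_inv_eq_iff_eq_mul]
    exact Equiv.ext (orbitMap_Rperm φ g)
  refine ⟨E, fst_orbitMap horb φ, ?_⟩
  ext x
  simp_rw [mem_map_conj_RG, hconj]
  refine ⟨?_, fun hx => ⟨(φ.symm ⟨x, hx⟩)⁻¹, by simp⟩⟩
  rintro ⟨g, rfl⟩
  exact (φ g⁻¹).2

end Semiregular

lemma exists_arcRel_pullback {m : ℕ} {G : Type*} [Group G] {S : Fin m → Fin m → Set G}
    (hS : ∀ i, S i i = ∅) {E : Perm (Fin m × G)} (hE : ∀ v, (E v).1 = v.1)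
    (hEaut : (RG m G).map (MulAut.conj E).toMonoidHom ≤ digraphAut m G S) :
    ∃ T : Fin m → Fin m → Set G, (∀ i, T i i = ∅) ∧
      ∀ u v, arcRel m T u v ↔ arcRel m S (E u) (E v) := by
  have hinv : ∀ g u v, arcRel m S (E (Rperm m g u)) (E (Rperm m g v)) ↔
      arcRel m S (E u) (E v) := fun g u v => by
    simpa using hEaut (mem_map_conj_RG.2 ⟨g, rfl⟩) (E u) (E v)
  refine ⟨connectionSets fun u v => arcRel m S (E u) (E v), fun i => ?_,
    arcRel_connectionSets hinv⟩
  ext t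
  simp [connectionSets, arcRel, hE, hS]

theorem isMPCI_iff_conjugate_general (G : Type*) [Group G] (m : ℕ)
    (S : Fin m → Fin m → Set G) (hS : ∀ i, S i i = (∅ : Set G)) :
    IsMPCI m G S ↔
      ∀ H : Subgroup (Equiv.Perm (Fin m × G)), H ≤ digraphAut m G S →
        (∀ h ∈ H, ∀ v : Fin m × G, h v = v → h = 1) →
        (∀ v w : Fin m × G, (∃ h ∈ H, h v = w) ↔ v.1 = w.1) →
        Nonempty (H ≃* G) →
        ∃ a ∈ digraphAut m G S,
          Subgroup.map (MulAut.conj a).toMonoidHom (RG m G) = H := by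
  constructor
  · rintro hmpci H hHaut hsemi horb ⟨φ⟩
    obtain ⟨E, hE, rfl⟩ := exists_perm_map_conj_RG_eq hsemi horb φ.symm
    obtain ⟨T, hT, hET⟩ := exists_arcRel_pullback hS hE hHaut
    have hE' : ∀ v, (E⁻¹ v).1 = v.1 := fun v => by simpa using (hE (E⁻¹ v)).symm
    obtain ⟨n, hn, hnT⟩ := hmpci T hT ⟨E⁻¹, ⟨id, hE'⟩, fun u v => by simp [hET]⟩
    refine ⟨E * n, fun u v => ?_, Subgroup.map_conj_eq_map_conj_iff.2 (by simpa using hn)⟩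
    simpa [hET] using (hnT u v).symm
  · rintro hconj T - ⟨e, ⟨τ, hτ⟩, he⟩
    rcases Nat.eq_zero_or_pos m with rfl | hm
    · exact ⟨1, one_mem _, fun u => u.1.elim0⟩
    have : NeZero m := ⟨hm.ne'⟩
    obtain ⟨a, ha, hmap⟩ := hconj _ (map_conj_RG_le_digraphAut he) (map_conj_RG_semiregular e⁻¹)
      (fun v w => by
        rw [exists_mem_map_conj_RG_apply_eq_iff, inv_inv, Perm.fst_apply_eq_fst_apply_iff hτ])
      ⟨((RG m G).equivMapOfInjective _ (MulAut.conj e⁻¹).injective).symm.trans RGEquiv.symm⟩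
    refine ⟨e * a, by simpa using Subgroup.map_conj_eq_map_conj_iff.1 hmap, fun u v => ?_⟩
    simpa using (ha u v).symm.trans (he (a u) (a v))

/-- **Babai-type criterion for mPCI.** An `m`-PCayley digraph
`Γ = Cay(G, S_{i,j})` of a finite group `G` is mPCI if and only if every
semiregular subgroup of `Aut(Γ)` isomorphic to `G` whose orbit set is
`{G_1, …, G_m}` is conjugate to `R(G)` in `Aut(Γ)`. -/
theorem isMPCI_iff_conjugate (G : Type*) [Group G] [Finite G] (m : ℕ)
    (S : Fin m → Fin m → Set G) (hS : ∀ i, S i i = (∅ : Set G)) :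
    IsMPCI m G S ↔
      ∀ H : Subgroup (Equiv.Perm (Fin m × G)), H ≤ digraphAut m G S →
        (∀ h ∈ H, ∀ v : Fin m × G, h v = v → h = 1) →
        (∀ v w : Fin m × G, (∃ h ∈ H, h v = w) ↔ v.1 = w.1) →
        Nonempty (H ≃* G) →
        ∃ a ∈ digraphAut m G S,
          Subgroup.map (MulAut.conj a).toMonoidHom (RG m G) = H :=
  isMPCI_iff_conjugate_general G m S hS
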